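/- arXiv:1901.03139 — 5 statements merged into one kernel-verified Lean document; each statement's English description precedes it below -/
import Mathlib

section
/- Let N ≥ 1 and let ρ : ℝ^N → ℝ be a C^∞ function with ρ(x) > 0 for every x. Then for every index i ∈ {1,…,N} and every x ∈ ℝ^N one has ∑_{j=1}^N ∂_j( ρ ∂_i ∂_j (log ρ) )(x) = 2 ρ(x) ∂_i( (Δ√ρ)/√ρ )(x), i.e. div(ρ ∇∇ log ρ) = 2 ρ ∇( Δ√ρ / √ρ ). -/
/-- The `i`-th partial derivative of a function on `ℝ^N`. -/
noncomputable def pderiv' {N : ℕ} (i : Fin N) (f : (Fin N → ℝ) → ℝ) :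
    (Fin N → ℝ) → ℝ :=
  fun x => fderiv ℝ f x (Pi.single i 1)

/-- The Laplacian `Δf = ∑ⱼ ∂ⱼ∂ⱼ f` of a function on `ℝ^N`. -/
noncomputable def laplacian' {N : ℕ} (f : (Fin N → ℝ) → ℝ) : (Fin N → ℝ) → ℝ :=
  fun x => ∑ j, pderiv' j (pderiv' j f) x


section helpers
variable {N : ℕ} {i j : Fin N} {f g : (Fin N → ℝ) → ℝ} {x : Fin N → ℝ}

lemma contDiff_pderiv' (i : Fin N) (hf : ContDiff ℝ (⊤ : ℕ∞) f) : ContDiff ℝ (⊤ : ℕ∞) (pderiv' i f) :=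
  (hf.fderiv_right (by simp)).clm_apply contDiff_const

lemma pderiv'_mul (hf : DifferentiableAt ℝ f x) (hg : DifferentiableAt ℝ g x) :
    pderiv' i (fun y => f y * g y) x = pderiv' i f x * g x + f x * pderiv' i g x := by
  simp only [pderiv', fderiv_fun_mul hf hg, ContinuousLinearMap.add_apply,
    ContinuousLinearMap.smul_apply, smul_eq_mul]
  ring

lemma pderiv'_const_mul (c : ℝ) (hf : DifferentiableAt ℝ f x) :
    pderiv' i (fun y => c * f y) x = c * pderiv' i f x := by
  simp [pderiv', fderiv_const_mul hf]

lemma pderiv'_add (hf : DifferentiableAt ℝ f x) (hg : DifferentiableAt ℝ g x) :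
    pderiv' i (fun y => f y + g y) x = pderiv' i f x + pderiv' i g x := by
  simp [pderiv', fderiv_fun_add hf hg]

lemma pderiv'_sum {s : Finset (Fin N)} {F : Fin N → (Fin N → ℝ) → ℝ}
    (hF : ∀ k ∈ s, DifferentiableAt ℝ (F k) x) :
    pderiv' i (fun y => ∑ k ∈ s, F k y) x = ∑ k ∈ s, pderiv' i (F k) x := by
  simp [pderiv', fderiv_fun_sum hF]

lemma pderiv'_exp (hf : DifferentiableAt ℝ f x) :
    pderiv' i (fun y => Real.exp (f y)) x = Real.exp (f x) * pderiv' i f x := by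
  have h := (Real.hasDerivAt_exp (f x)).comp_hasFDerivAt x hf.hasFDerivAt
  have : fderiv ℝ (fun y => Real.exp (f y)) x = Real.exp (f x) • fderiv ℝ f x :=
    h.fderiv
  simp [pderiv', this]

lemma pderiv'_comm (hf : ContDiff ℝ (⊤ : ℕ∞) f) (i j : Fin N) :
    pderiv' i (pderiv' j f) x = pderiv' j (pderiv' i f) x := by
  have hd : ∀ y, HasFDerivAt f (fderiv ℝ f y) y :=
    fun y => (hf.differentiable (by simp) y).hasFDerivAt
  have hd2 : DifferentiableAt ℝ (fderiv ℝ f) x :=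
    ((hf.fderiv_right (m := (⊤ : ℕ∞)) (by simp)).differentiable (by simp)) x
  have hsymm := second_derivative_symmetric hd hd2.hasFDerivAt
  have ev : ∀ (v w : Fin N → ℝ),
      fderiv ℝ (fun y => fderiv ℝ f y v) x w = fderiv ℝ (fderiv ℝ f) x w v := by
    intro v w
    have h1 : (fun y => fderiv ℝ f y v)
        = fun y => (fderiv ℝ f y) ((fun _ : Fin N → ℝ => v) y) := rfl
    rw [h1, fderiv_clm_apply hd2 (differentiableAt_const v)]
    simp
  have e1 : pderiv' j f = fun y => fderiv ℝ f y (Pi.single j 1) := rfl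
  have e2 : pderiv' i f = fun y => fderiv ℝ f y (Pi.single i 1) := rfl
  simp only [pderiv', e1, e2]
  rw [ev, ev]
  exact hsymm _ _
end helpers


/-- For a smooth positive density `ρ` on `ℝ^N`, the Korteweg (quantum pressure) identity
`div(ρ ∇∇ log ρ) = 2 ρ ∇(Δ√ρ / √ρ)` holds componentwise:
`∑ⱼ ∂ⱼ(ρ ∂ᵢ∂ⱼ log ρ) = 2 ρ ∂ᵢ(Δ√ρ / √ρ)`. -/
theorem korteweg_tensor_identity (N : ℕ) (hN : 1 ≤ N) (ρ : (Fin N → ℝ) → ℝ)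
    (hρ : ContDiff ℝ (⊤ : ℕ∞) ρ) (hpos : ∀ x, 0 < ρ x) (i : Fin N) (x : Fin N → ℝ) :
    ∑ j, pderiv' j (fun y => ρ y * pderiv' i (pderiv' j (fun z => Real.log (ρ z))) y) x =
      2 * ρ x *
        pderiv' i (fun y => laplacian' (fun z => Real.sqrt (ρ z)) y / Real.sqrt (ρ y)) x := by
  set L : (Fin N → ℝ) → ℝ := fun z => Real.log (ρ z) with hLdef
  have hL : ContDiff ℝ (⊤ : ℕ∞) L := by
    rw [contDiff_iff_contDiffAt]
    intro y
    exact (Real.contDiffAt_log.mpr (hpos y).ne').comp y hρ.contDiffAt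
  -- differentiability of everything in sight
  have hdL : ∀ (j : Fin N), ContDiff ℝ (⊤ : ℕ∞) (pderiv' j L) := fun j => contDiff_pderiv' j hL
  have hddL : ∀ (k j : Fin N), ContDiff ℝ (⊤ : ℕ∞) (pderiv' k (pderiv' j L)) :=
    fun k j => contDiff_pderiv' k (hdL j)
  have D : ∀ {g : (Fin N → ℝ) → ℝ}, ContDiff ℝ (⊤ : ℕ∞) g → ∀ y, DifferentiableAt ℝ g y :=
    fun hg y => hg.differentiable (by simp) y
  -- ρ = exp ∘ L
  have hρy : ∀ y, ρ y = Real.exp (L y) := fun y => (Real.exp_log (hpos y)).symm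
  have hρe : ρ = fun y => Real.exp (L y) := funext hρy
  -- ∂ⱼρ = ρ ∂ⱼL
  have hdρ : ∀ (j : Fin N) (y : Fin N → ℝ),
      pderiv' j ρ y = ρ y * pderiv' j L y := by
    intro j y
    conv_lhs => rw [hρe]
    rw [pderiv'_exp (D hL y), ← hρy y]
  -- √ρ = exp ((1/2) L)
  set S : (Fin N → ℝ) → ℝ := fun z => Real.exp ((1/2) * L z) with hSdef
  have hSy : ∀ z, Real.sqrt (ρ z) = S z := by
    intro z
    have h1 : ρ z = S z * S z := by
      rw [hSdef, ← Real.exp_add, hρy z]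
      ring_nf
    rw [h1, Real.sqrt_mul_self (Real.exp_pos _).le]
  have hSe : (fun z => Real.sqrt (ρ z)) = S := funext hSy
  have hM : ContDiff ℝ (⊤ : ℕ∞) (fun z => (1/2 : ℝ) * L z) := contDiff_const.mul hL
  have hS : ContDiff ℝ (⊤ : ℕ∞) S := Real.contDiff_exp.comp hM
  have hSpos : ∀ y, 0 < S y := fun y => Real.exp_pos _
  -- ∂ⱼ S = S * ((1/2) ∂ⱼL)
  have hdS : ∀ (j : Fin N), pderiv' j S = fun y => S y * ((1/2) * pderiv' j L y) := by
    intro j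
    funext y
    rw [hSdef]
    rw [pderiv'_exp (D hM y), pderiv'_const_mul _ (D hL y)]
  have hdS' : ∀ (j : Fin N), ContDiff ℝ (⊤ : ℕ∞) (pderiv' j S) := fun j => contDiff_pderiv' j hS
  -- ∂ⱼ∂ⱼ S
  have hddS : ∀ (j : Fin N) (y : Fin N → ℝ),
      pderiv' j (pderiv' j S) y
        = S y * ((1/4) * (pderiv' j L y)^2 + (1/2) * pderiv' j (pderiv' j L) y) := by
    intro j y
    rw [hdS j]
    rw [pderiv'_mul (D hS y) ((contDiff_const.mul (hdL j)).differentiable (by simp) y)]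
    rw [pderiv'_const_mul _ (D (hdL j) y), hdS j]
    ring
  -- Δ√ρ / √ρ  =  Q
  have hQeq : (fun y => laplacian' (fun z => Real.sqrt (ρ z)) y / Real.sqrt (ρ y))
      = fun y => ∑ j, ((1/4) * (pderiv' j L y)^2 + (1/2) * pderiv' j (pderiv' j L) y) := by
    funext y
    have h2 : laplacian' S y
        = S y * ∑ j, ((1/4) * (pderiv' j L y)^2 + (1/2) * pderiv' j (pderiv' j L) y) := by
      rw [laplacian', Finset.mul_sum]
      exact Finset.sum_congr rfl fun j _ => hddS j y
    rw [hSe, hSy y, h2]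
    rw [mul_div_cancel_left₀ _ (hSpos y).ne']
  rw [hQeq]
  -- differentiability of Q-summands
  have hQj : ∀ (j : Fin N), ContDiff ℝ (⊤ : ℕ∞)
      (fun y => (1/4) * (pderiv' j L y)^2 + (1/2) * pderiv' j (pderiv' j L) y) := by
    intro j
    exact (contDiff_const.mul ((hdL j).pow 2)).add (contDiff_const.mul (hddL j j))
  -- ∂ᵢ Q
  have hdQ : pderiv' i (fun y => ∑ j, ((1/4) * (pderiv' j L y)^2 + (1/2) * pderiv' j (pderiv' j L) y)) x
      = ∑ j, ((1/2) * pderiv' j L x * pderiv' i (pderiv' j L) x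
          + (1/2) * pderiv' i (pderiv' j (pderiv' j L)) x) := by
    rw [pderiv'_sum (fun k _ => D (hQj k) x)]
    refine Finset.sum_congr rfl fun j _ => ?_
    rw [pderiv'_add (D (contDiff_const.mul ((hdL j).pow 2)) x)
        (D (contDiff_const.mul (hddL j j)) x),
      pderiv'_const_mul _ (D ((hdL j).pow 2) x),
      pderiv'_const_mul _ (D (hddL j j) x)]
    have hsq : (fun y => (pderiv' j L y)^2) = fun y => pderiv' j L y * pderiv' j L y := by
      funext y; ring
    rw [hsq, pderiv'_mul (D (hdL j) x) (D (hdL j) x)]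
    ring
  rw [hdQ]
  -- LHS
  have hLHS : ∀ (j : Fin N),
      pderiv' j (fun y => ρ y * pderiv' i (pderiv' j L) y) x
        = ρ x * pderiv' j L x * pderiv' i (pderiv' j L) x
          + ρ x * pderiv' i (pderiv' j (pderiv' j L)) x := by
    intro j
    rw [pderiv'_mul (D hρ x) (D (hddL i j) x), hdρ j x,
      pderiv'_comm (hdL j) j i]
  calc ∑ j, pderiv' j (fun y => ρ y * pderiv' i (pderiv' j L) y) x
      = ∑ j, (ρ x * pderiv' j L x * pderiv' i (pderiv' j L) x
          + ρ x * pderiv' i (pderiv' j (pderiv' j L)) x) :=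
        Finset.sum_congr rfl fun j _ => hLHS j
    _ = 2 * ρ x * ∑ j, ((1/2) * pderiv' j L x * pderiv' i (pderiv' j L) x
          + (1/2) * pderiv' i (pderiv' j (pderiv' j L)) x) := by
        rw [Finset.mul_sum]
        exact Finset.sum_congr rfl fun j _ => by ring
end

section
/- Let N ≥ 1, μ > 0 and 0 < κ² ≤ μ², and let P : ℝ → ℝ be smooth. Set c₁ = μ − √(μ² − κ²) and c₂ = μ + √(μ² − κ²). Let (ρ, u) be a classical solution of the Korteweg system with pressure law P on (0,∞) × ℝ^N and define the effective velocities v₁ = u + c₁ ∇(log ρ) and v₂ = u + c₂ ∇(log ρ). Then the following three equations hold pointwise on (0,∞) × ℝ^N: (i) ∂_t ρ − c₁ Δρ + div(ρ v₁) = 0; (ii) ∂_t(ρ v₁) + ½ div(ρ v₁ ⊗ v₂) + ½ div(ρ v₂ ⊗ v₁) − μ Δ(ρ v₁) − √(μ² − κ²) ∇ div(ρ v₁) + ∇(P(ρ)) = 0; (iii) ∂_t(ρ v₂) + ½ div(ρ v₁ ⊗ v₂) + ½ div(ρ v₂ ⊗ v₁) − μ Δ(ρ v₂) + √(μ² − κ²)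 ∇ div(ρ v₂) + ∇(P(ρ)) = 0. -/
/-- Time derivative `∂ₜ f` of a function on `ℝ × ℝ^N`. -/
noncomputable def dt' {N : ℕ} (f : ℝ × (Fin N → ℝ) → ℝ) (p : ℝ × (Fin N → ℝ)) : ℝ :=
  fderiv ℝ f p (1, 0)

/-- Spatial partial derivative `∂ⱼ f` of a function on `ℝ × ℝ^N`. -/
noncomputable def dx' {N : ℕ} (j : Fin N) (f : ℝ × (Fin N → ℝ) → ℝ)
    (p : ℝ × (Fin N → ℝ)) : ℝ :=
  fderiv ℝ f p (0, Pi.single j 1)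

/-- Spatial Laplacian `Δf = ∑ⱼ ∂ⱼ∂ⱼ f` of a function on `ℝ × ℝ^N`. -/
noncomputable def lapx' {N : ℕ} (f : ℝ × (Fin N → ℝ) → ℝ) (p : ℝ × (Fin N → ℝ)) : ℝ :=
  ∑ j, dx' j (dx' j f) p

/-- `(ρ, u)` is a classical solution on `(0,∞) × ℝ^N` of the Korteweg system with viscosity
`μ`, capillarity coefficient `κ2 = κ²` and pressure law `P`. -/
def IsKortewegSolution (N : ℕ) (μ κ2 : ℝ) (P : ℝ → ℝ)
    (ρ : ℝ × (Fin N → ℝ) → ℝ) (u : ℝ × (Fin N → ℝ) → Fin N → ℝ) : Prop :=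
  ContDiffOn ℝ (⊤ : ℕ∞) ρ {p : ℝ × (Fin N → ℝ) | 0 < p.1} ∧
  ContDiffOn ℝ (⊤ : ℕ∞) u {p : ℝ × (Fin N → ℝ) | 0 < p.1} ∧
  (∀ p : ℝ × (Fin N → ℝ), 0 < p.1 → 0 < ρ p) ∧
  (∀ p : ℝ × (Fin N → ℝ), 0 < p.1 →
    dt' ρ p + ∑ j, dx' j (fun q => ρ q * u q j) p = 0) ∧
  (∀ p : ℝ × (Fin N → ℝ), 0 < p.1 → ∀ i : Fin N,
    dt' (fun q => ρ q * u q i) p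
      + ∑ j, dx' j (fun q => ρ q * u q i * u q j) p
      - ∑ j, dx' j (fun q => 2 * μ * ρ q *
          ((1 / 2) * (dx' j (fun r => u r i) q + dx' i (fun r => u r j) q))) p
      + dx' i (fun q => P (ρ q)) p
      = 2 * κ2 * ρ p *
          dx' i (fun q => lapx' (fun r => Real.sqrt (ρ r)) q / Real.sqrt (ρ q)) p)

namespace KW

abbrev Pt (N : ℕ) := ℝ × (Fin N → ℝ)

variable {N : ℕ}

noncomputable def pd (y : Pt N) (f : Pt N → ℝ) (p : Pt N) : ℝ := fderiv ℝ f p y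

def ex (j : Fin N) : Pt N := (0, Pi.single j 1)
def et : Pt N := (1, 0)

lemma dx'_eq (j : Fin N) (f : Pt N → ℝ) : dx' j f = pd (ex j) f := rfl
lemma dt'_eq (f : Pt N → ℝ) : dt' f = pd (et (N := N)) f := rfl
lemma lapx'_eq (f : Pt N → ℝ) (p : Pt N) : lapx' f p = ∑ j, pd (ex j) (pd (ex j) f) p := rfl

def U (N : ℕ) : Set (Pt N) := {p | 0 < p.1}
lemma isOpenU : IsOpen (U N) := isOpen_lt continuous_const continuous_fst
lemma nhdsU {p : Pt N} (hp : p ∈ U N) : U N ∈ nhds p := isOpenU.mem_nhds hp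

def Sm (f : Pt N → ℝ) : Prop := ContDiffOn ℝ (⊤ : ℕ∞) f (U N)

variable {f g : Pt N → ℝ} {p y z : Pt N}

lemma Sm.da (hf : Sm f) (hp : p ∈ U N) : DifferentiableAt ℝ f p :=
  (hf.contDiffAt (nhdsU hp)).differentiableAt (by simp)

lemma Sm.pd (hf : Sm f) (y : Pt N) : Sm (pd y f) :=
  (hf.fderiv_of_isOpen isOpenU (by simp)).clm_apply contDiffOn_const

lemma Sm.mul (hf : Sm f) (hg : Sm g) : Sm (fun q => f q * g q) :=
  ContDiffOn.mul hf hg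

lemma Sm.add (hf : Sm f) (hg : Sm g) : Sm (fun q => f q + g q) :=
  ContDiffOn.add hf hg

lemma Sm.constMul (hf : Sm f) (a : ℝ) : Sm (fun q => a * f q) :=
  ContDiffOn.mul contDiffOn_const hf

lemma Sm.sum {ι : Type*} {s : Finset ι} {F : ι → Pt N → ℝ} (hF : ∀ i ∈ s, Sm (F i)) :
    Sm (fun q => ∑ i ∈ s, F i q) :=
  ContDiffOn.sum hF

lemma pd_congrU (hfg : ∀ q ∈ U N, f q = g q) (hp : p ∈ U N) : pd y f p = pd y g p := by
  have h : f =ᶠ[nhds p] g := Filter.eventuallyEq_of_mem (nhdsU hp) hfg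
  simp only [pd, h.fderiv_eq]

lemma pd_add (hf : DifferentiableAt ℝ f p) (hg : DifferentiableAt ℝ g p) :
    pd y (fun q => f q + g q) p = pd y f p + pd y g p := by
  simp only [pd, fderiv_fun_add hf hg, ContinuousLinearMap.add_apply]

lemma pd_mul (hf : DifferentiableAt ℝ f p) (hg : DifferentiableAt ℝ g p) :
    pd y (fun q => f q * g q) p = pd y f p * g p + f p * pd y g p := by
  simp only [pd, fderiv_fun_mul hf hg, ContinuousLinearMap.add_apply,
    ContinuousLinearMap.smul_apply, smul_eq_mul]
  ring

lemma pd_constMul (hf : DifferentiableAt ℝ f p) (a : ℝ) :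
    pd y (fun q => a * f q) p = a * pd y f p := by
  simp only [pd, fderiv_const_mul hf a, ContinuousLinearMap.smul_apply, smul_eq_mul]

lemma pd_neg : pd y (fun q => -f q) p = -pd y f p := by
  simp only [pd, fderiv_fun_neg, ContinuousLinearMap.neg_apply]

lemma pd_sum {ι : Type*} {s : Finset ι} {F : ι → Pt N → ℝ}
    (hF : ∀ i ∈ s, DifferentiableAt ℝ (F i) p) :
    pd y (fun q => ∑ i ∈ s, F i q) p = ∑ i ∈ s, pd y (F i) p := by
  simp only [pd, fderiv_fun_sum hF]
  simp

lemma pd_comm (hf : Sm f) (hp : p ∈ U N) : pd y (pd z f) p = pd z (pd y f) p := by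
  have hder : DifferentiableAt ℝ (fderiv ℝ f) p :=
    ((hf.fderiv_of_isOpen (m := 1) isOpenU (WithTop.coe_le_coe.mpr le_top)).contDiffAt (nhdsU hp)).differentiableAt one_ne_zero
  have hsym := (hf.contDiffAt (nhdsU hp)).isSymmSndFDerivAt (by rw [minSmoothness_of_isRCLikeNormedField]; exact WithTop.coe_le_coe.mpr le_top)
  have h1 : ∀ w v : Pt N, pd w (pd v f) p = fderiv ℝ (fderiv ℝ f) p w v := by
    intro w v
    have : pd v f = fun q => (fderiv ℝ f q) v := rfl
    rw [this]
    simp only [pd]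
    rw [fderiv_clm_apply hder (differentiableAt_const v)]
    simp
  rw [h1, h1, hsym z y]

lemma pd_log (hf : DifferentiableAt ℝ f p) (h0 : f p ≠ 0) :
    pd y (fun q => Real.log (f q)) p = pd y f p / f p := by
  simp only [pd]
  rw [(hf.hasFDerivAt.log h0).fderiv]
  simp [div_eq_inv_mul, ContinuousLinearMap.smul_apply]

lemma pd_sqrt (hf : DifferentiableAt ℝ f p) (h0 : f p ≠ 0) :
    pd y (fun q => Real.sqrt (f q)) p = pd y f p / (2 * Real.sqrt (f p)) := by
  simp only [pd]
  rw [(hf.hasFDerivAt.sqrt h0).fderiv]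
  simp only [ContinuousLinearMap.smul_apply, smul_eq_mul]
  field_simp

end KW

namespace KW

section Setting

variable {N : ℕ} {ρ : Pt N → ℝ} {u : Pt N → Fin N → ℝ}

/-- `∇ log ρ` components. -/
noncomputable def W (ρ : Pt N → ℝ) (j : Fin N) : Pt N → ℝ :=
  pd (ex j) (fun q => Real.log (ρ q))

variable (hρ : Sm ρ) (hpos : ∀ q ∈ U N, 0 < ρ q)

include hρ hpos in
lemma Sm_log : Sm (fun q => Real.log (ρ q)) :=
  ContDiffOn.log hρ (fun q hq => (hpos q hq).ne')

include hρ hpos in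
lemma Sm_W (j : Fin N) : Sm (W ρ j) := (Sm_log hρ hpos).pd _

lemma Sm_u (hu : ContDiffOn ℝ (⊤ : ℕ∞) u (U N)) (i : Fin N) : Sm (fun q => u q i) :=
  (ContinuousLinearMap.proj (R := ℝ) (φ := fun _ : Fin N => ℝ) i).contDiff.comp_contDiffOn hu

include hρ hpos in
lemma Sm_sqrt : Sm (fun q => Real.sqrt (ρ q)) :=
  ContDiffOn.sqrt hρ (fun q hq => (hpos q hq).ne')

include hρ hpos in
lemma H1 (k : Fin N) {q : Pt N} (hq : q ∈ U N) :
    pd (ex k) ρ q = ρ q * W ρ k q := by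
  unfold W
  rw [pd_log (hρ.da hq) (hpos q hq).ne']
  rw [mul_div_cancel₀ _ (hpos q hq).ne']

include hρ hpos in
lemma Wsym (k l : Fin N) {q : Pt N} (hq : q ∈ U N) :
    pd (ex l) (W ρ k) q = pd (ex k) (W ρ l) q :=
  pd_comm (Sm_log hρ hpos) hq

include hρ hpos in
lemma pd_rho_mul2 {f : Pt N → ℝ} (hf : Sm f) (l : Fin N) {p : Pt N} (hp : p ∈ U N) :
    pd (ex l) (fun q => ρ q * f q) p
      = ρ p * W ρ l p * f p + ρ p * pd (ex l) f p := by
  rw [pd_mul (hρ.da hp) (hf.da hp), H1 hρ hpos l hp]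

include hρ hpos in
lemma pd_rho_mul3 {f g : Pt N → ℝ} (hf : Sm f) (hg : Sm g) (l : Fin N) {p : Pt N}
    (hp : p ∈ U N) :
    pd (ex l) (fun q => ρ q * f q * g q) p
      = ρ p * W ρ l p * (f p * g p)
        + ρ p * (pd (ex l) f p * g p + f p * pd (ex l) g p) := by
  rw [pd_mul ((hρ.da hp).fun_mul (hf.da hp)) (hg.da hp), pd_mul (hρ.da hp) (hf.da hp),
    H1 hρ hpos l hp]
  ring

include hρ hpos in
lemma Drr (k l : Fin N) {q : Pt N} (hq : q ∈ U N) :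
    pd (ex l) (pd (ex k) ρ) q
      = ρ q * W ρ l q * W ρ k q + ρ q * pd (ex l) (W ρ k) q := by
  rw [pd_congrU (fun r hr => H1 hρ hpos k hr) hq]
  exact pd_rho_mul2 hρ hpos (Sm_W hρ hpos k) l hq

include hρ hpos in
lemma F3a (j : Fin N) {q : Pt N} (hq : q ∈ U N) :
    pd (ex j) (fun r => Real.sqrt (ρ r)) q = Real.sqrt (ρ q) * ((1/2) * W ρ j q) := by
  have h0 : ρ q ≠ 0 := (hpos q hq).ne'
  have hs : Real.sqrt (ρ q) ≠ 0 := (Real.sqrt_ne_zero'.mpr (hpos q hq))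
  rw [pd_sqrt (hρ.da hq) h0]
  unfold W
  rw [pd_log (hρ.da hq) h0]
  have key : Real.sqrt (ρ q) * Real.sqrt (ρ q) = ρ q := Real.mul_self_sqrt (hpos q hq).le
  rw [div_eq_iff (by positivity : (2 : ℝ) * Real.sqrt (ρ q) ≠ 0)]
  field_simp
  linear_combination (-pd (ex j) ρ q) * key

include hρ hpos in
lemma F3b (j : Fin N) {q : Pt N} (hq : q ∈ U N) :
    pd (ex j) (pd (ex j) (fun r => Real.sqrt (ρ r))) q
      = Real.sqrt (ρ q) * ((1/4) * (W ρ j q * W ρ j q) + (1/2) * pd (ex j) (W ρ j) q) := by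
  rw [pd_congrU (fun r hr => F3a hρ hpos j hr) hq]
  rw [pd_mul (y := ex j) ((Sm_sqrt hρ hpos).da hq) (((Sm_W hρ hpos j).constMul (1/2)).da hq)]
  rw [F3a hρ hpos j hq, pd_constMul ((Sm_W hρ hpos j).da hq)]
  ring

include hρ hpos in
lemma F3 {q : Pt N} (hq : q ∈ U N) :
    lapx' (fun r => Real.sqrt (ρ r)) q / Real.sqrt (ρ q)
      = ∑ j, ((1/4) * (W ρ j q * W ρ j q) + (1/2) * pd (ex j) (W ρ j) q) := by
  have hs : Real.sqrt (ρ q) ≠ 0 := (Real.sqrt_ne_zero'.mpr (hpos q hq))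
  rw [lapx'_eq]
  rw [Finset.sum_congr rfl (fun j _ => F3b hρ hpos j hq)]
  rw [← Finset.mul_sum]
  field_simp
  exact Finset.sum_congr rfl fun x _ => by ring

end Setting

section Key

variable {N : ℕ} {μ κ2 : ℝ} {P : ℝ → ℝ} {ρ : Pt N → ℝ} {u : Pt N → Fin N → ℝ}

lemma pd_comb4 {f1 f2 f3 f4 : Pt N → ℝ} {p y : Pt N} (a2 a3 a4 : ℝ)
    (h1 : DifferentiableAt ℝ f1 p) (h2 : DifferentiableAt ℝ f2 p)
    (h3 : DifferentiableAt ℝ f3 p) (h4 : DifferentiableAt ℝ f4 p) :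
    pd y (fun q => f1 q + (a2 * f2 q + (a3 * f3 q + a4 * f4 q))) p
      = pd y f1 p + a2 * pd y f2 p + a3 * pd y f3 p + a4 * pd y f4 p := by
  rw [pd_add h1 ((h2.const_mul a2).fun_add ((h3.const_mul a3).fun_add (h4.const_mul a4))),
    pd_add (h2.const_mul a2) ((h3.const_mul a3).fun_add (h4.const_mul a4)),
    pd_add (h3.const_mul a3) (h4.const_mul a4),
    pd_constMul h2, pd_constMul h3, pd_constMul h4]
  ring

lemma key (hρ : Sm ρ) (hu : ContDiffOn ℝ (⊤ : ℕ∞) u (U N)) (hpos : ∀ q ∈ U N, 0 < ρ q)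
    (hcont : ∀ p ∈ U N, pd et ρ p + ∑ j, pd (ex j) (fun q => ρ q * u q j) p = 0)
    (hmom : ∀ p ∈ U N, ∀ i : Fin N,
      pd et (fun q => ρ q * u q i) p
        + ∑ j, pd (ex j) (fun q => ρ q * u q i * u q j) p
        - ∑ j, pd (ex j) (fun q => 2 * μ * ρ q *
            ((1 / 2) * (pd (ex j) (fun r => u r i) q + pd (ex i) (fun r => u r j) q))) p
        + pd (ex i) (fun q => P (ρ q)) p
        = 2 * κ2 * ρ p *
            pd (ex i) (fun q => lapx' (fun r => Real.sqrt (ρ r)) q / Real.sqrt (ρ q)) p)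
    (c : ℝ) (hcκ : c * (2 * μ - c) = κ2)
    (v v' : Pt N → Fin N → ℝ)
    (hv : ∀ q : Pt N, ∀ j : Fin N, v q j = u q j + c * W ρ j q)
    (hv' : ∀ q : Pt N, ∀ j : Fin N, v' q j = u q j + (2 * μ - c) * W ρ j q) :
    ∀ p ∈ U N, ∀ i : Fin N,
      pd et (fun q => ρ q * v q i) p
        + (1 / 2) * ∑ j, pd (ex j) (fun q => ρ q * v q i * v' q j) p
        + (1 / 2) * ∑ j, pd (ex j) (fun q => ρ q * v' q i * v q j) p
        - μ * ∑ j, pd (ex j) (pd (ex j) (fun q => ρ q * v q i)) p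
        - (μ - c) * pd (ex i) (fun q => ∑ j, pd (ex j) (fun x => ρ x * v x j) q) p
        + pd (ex i) (fun q => P (ρ q)) p = 0 := by
  intro p hp i
  have hus : ∀ k : Fin N, Sm (fun r => u r k) := fun k => Sm_u hu k
  have hWs : ∀ k : Fin N, Sm (W ρ k) := fun k => Sm_W hρ hpos k
  have hρu : ∀ k : Fin N, Sm (fun x => ρ x * u x k) := fun k => hρ.mul (hus k)
  have hWsymp : ∀ j : Fin N, pd (ex j) (W ρ i) p = pd (ex i) (W ρ j) p :=
    fun j => Wsym hρ hpos i j hp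
  have hswap : ∀ j : Fin N,
      pd (ex j) (pd (ex j) (W ρ i)) p = pd (ex i) (pd (ex j) (W ρ j)) p := by
    intro j
    rw [pd_congrU (fun r hr => Wsym hρ hpos i j hr) hp]
    exact pd_comm (hWs j) hp
  -- effective momentum density expansion
  have hrv : ∀ k : Fin N, ∀ q ∈ U N, ρ q * v q k = ρ q * u q k + c * pd (ex k) ρ q := by
    intro k q hq
    rw [hv q k, H1 hρ hpos k hq]; ring
  have hD1 : ∀ k l : Fin N, ∀ q ∈ U N, pd (ex l) (fun x => ρ x * v x k) q
      = pd (ex l) (fun x => ρ x * u x k) q + c * pd (ex l) (pd (ex k) ρ) q := by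
    intro k l q hq
    rw [pd_congrU (fun r hr => hrv k r hr) hq,
      pd_add ((hρu k).da hq) (((hρ.pd (ex k)).constMul c).da hq),
      pd_constMul ((hρ.pd (ex k)).da hq)]
  -- time derivative reduction
  have hT1 : pd et (fun q => ρ q * v q i) p
      = pd et (fun x => ρ x * u x i) p
        - c * ∑ j, pd (ex i) (pd (ex j) (fun x => ρ x * u x j)) p := by
    rw [pd_congrU (fun r hr => hrv i r hr) hp,
      pd_add ((hρu i).da hp) (((hρ.pd (ex i)).constMul c).da hp),
      pd_constMul ((hρ.pd (ex i)).da hp),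
      pd_comm hρ hp]
    have h2 : ∀ q ∈ U N, pd et ρ q = -(∑ j, pd (ex j) (fun x => ρ x * u x j) q) := by
      intro q hq; linarith [hcont q hq]
    rw [pd_congrU h2 hp, pd_neg, pd_sum (fun j _ => (((hρu j).pd (ex j)).da hp))]
    ring
  -- divergence term reduction
  have hT5 : pd (ex i) (fun q => ∑ j, pd (ex j) (fun x => ρ x * v x j) q) p
      = ∑ j, (pd (ex i) (pd (ex j) (fun x => ρ x * u x j)) p
          + c * pd (ex i) (pd (ex j) (pd (ex j) ρ)) p) := by
    have hin : ∀ q ∈ U N, (∑ j, pd (ex j) (fun x => ρ x * v x j) q)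
        = ∑ j, (pd (ex j) (fun x => ρ x * u x j) q + c * pd (ex j) (pd (ex j) ρ) q) :=
      fun q hq => Finset.sum_congr rfl fun j _ => hD1 j j q hq
    rw [pd_congrU hin hp,
      pd_sum (fun j _ => (((hρu j).pd (ex j)).add
        (((hρ.pd (ex j)).pd (ex j)).constMul c)).da hp)]
    refine Finset.sum_congr rfl fun j _ => ?_
    rw [pd_add (((hρu j).pd (ex j)).da hp) ((((hρ.pd (ex j)).pd (ex j)).constMul c).da hp),
      pd_constMul (((hρ.pd (ex j)).pd (ex j)).da hp)]
  -- symmetric convection expansion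
  have hs1 : ∀ j : Fin N, pd (ex j) (fun q => ρ q * v q i * v' q j) p
      = pd (ex j) (fun q => ρ q * u q i * u q j) p
        + (2 * μ - c) * pd (ex j) (fun q => ρ q * u q i * W ρ j q) p
        + c * pd (ex j) (fun q => ρ q * W ρ i q * u q j) p
        + c * (2 * μ - c) * pd (ex j) (fun q => ρ q * W ρ i q * W ρ j q) p := by
    intro j
    have hfn : (fun q => ρ q * v q i * v' q j)
        = (fun q => ρ q * u q i * u q j + ((2 * μ - c) * (ρ q * u q i * W ρ j q)
            + (c * (ρ q * W ρ i q * u q j)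
              + c * (2 * μ - c) * (ρ q * W ρ i q * W ρ j q)))) := by
      funext q; rw [hv q i, hv' q j]; ring
    rw [hfn, pd_comb4 _ _ _ (((hρ.mul (hus i)).mul (hus j)).da hp)
      (((hρ.mul (hus i)).mul (hWs j)).da hp) (((hρ.mul (hWs i)).mul (hus j)).da hp)
      (((hρ.mul (hWs i)).mul (hWs j)).da hp)]
  have hs2 : ∀ j : Fin N, pd (ex j) (fun q => ρ q * v' q i * v q j) p
      = pd (ex j) (fun q => ρ q * u q i * u q j) p
        + c * pd (ex j) (fun q => ρ q * u q i * W ρ j q) p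
        + (2 * μ - c) * pd (ex j) (fun q => ρ q * W ρ i q * u q j) p
        + c * (2 * μ - c) * pd (ex j) (fun q => ρ q * W ρ i q * W ρ j q) p := by
    intro j
    have hfn : (fun q => ρ q * v' q i * v q j)
        = (fun q => ρ q * u q i * u q j + (c * (ρ q * u q i * W ρ j q)
            + ((2 * μ - c) * (ρ q * W ρ i q * u q j)
              + c * (2 * μ - c) * (ρ q * W ρ i q * W ρ j q)))) := by
      funext q; rw [hv' q i, hv q j]; ring
    rw [hfn, pd_comb4 _ _ _ (((hρ.mul (hus i)).mul (hus j)).da hp)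
      (((hρ.mul (hus i)).mul (hWs j)).da hp) (((hρ.mul (hWs i)).mul (hus j)).da hp)
      (((hρ.mul (hWs i)).mul (hWs j)).da hp)]
  -- laplacian of momentum density
  have hs3 : ∀ j : Fin N, pd (ex j) (pd (ex j) (fun q => ρ q * v q i)) p
      = pd (ex j) (pd (ex j) (fun x => ρ x * u x i)) p
        + c * pd (ex j) (pd (ex j) (pd (ex i) ρ)) p := by
    intro j
    rw [pd_congrU (fun r hr => hD1 i j r hr) hp,
      pd_add (((hρu i).pd (ex j)).da hp) ((((hρ.pd (ex i)).pd (ex j)).constMul c).da hp),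
      pd_constMul (((hρ.pd (ex i)).pd (ex j)).da hp)]
  -- atomic expansions
  have e1 : ∀ j : Fin N, pd (ex j) (fun q => ρ q * u q i * u q j) p
      = ρ p * W ρ j p * (u p i * u p j)
        + ρ p * (pd (ex j) (fun r => u r i) p * u p j + u p i * pd (ex j) (fun r => u r j) p) :=
    fun j => pd_rho_mul3 hρ hpos (hus i) (hus j) j hp
  have e2 : ∀ j : Fin N, pd (ex j) (fun q => ρ q * u q i * W ρ j q) p
      = ρ p * W ρ j p * (u p i * W ρ j p)
        + ρ p * (pd (ex j) (fun r => u r i) p * W ρ j p + u p i * pd (ex j) (W ρ j) p) :=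
    fun j => pd_rho_mul3 hρ hpos (hus i) (hWs j) j hp
  have e3 : ∀ j : Fin N, pd (ex j) (fun q => ρ q * W ρ i q * u q j) p
      = ρ p * W ρ j p * (W ρ i p * u p j)
        + ρ p * (pd (ex i) (W ρ j) p * u p j + W ρ i p * pd (ex j) (fun r => u r j) p) := by
    intro j
    rw [pd_rho_mul3 hρ hpos (hWs i) (hus j) j hp, hWsymp j]
  have e4 : ∀ j : Fin N, pd (ex j) (fun q => ρ q * W ρ i q * W ρ j q) p
      = ρ p * W ρ j p * (W ρ i p * W ρ j p)
        + ρ p * (pd (ex i) (W ρ j) p * W ρ j p + W ρ i p * pd (ex j) (W ρ j) p) := by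
    intro j
    rw [pd_rho_mul3 hρ hpos (hWs i) (hWs j) j hp, hWsymp j]
  have hvisc : ∀ j : Fin N,
      pd (ex j) (fun q => 2 * μ * ρ q *
        ((1 / 2) * (pd (ex j) (fun r => u r i) q + pd (ex i) (fun r => u r j) q))) p
      = μ * (ρ p * W ρ j p * (pd (ex j) (fun r => u r i) p + pd (ex i) (fun r => u r j) p)
          + ρ p * (pd (ex j) (pd (ex j) (fun r => u r i)) p
            + pd (ex i) (pd (ex j) (fun r => u r j)) p)) := by
    intro j
    have hAB : Sm (fun q => pd (ex j) (fun r => u r i) q + pd (ex i) (fun r => u r j) q) :=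
      ((hus i).pd (ex j)).add ((hus j).pd (ex i))
    have hfn : (fun q => 2 * μ * ρ q *
        ((1 / 2) * (pd (ex j) (fun r => u r i) q + pd (ex i) (fun r => u r j) q)))
        = fun q => μ * (ρ q * (pd (ex j) (fun r => u r i) q + pd (ex i) (fun r => u r j) q)) := by
      funext q; ring
    rw [hfn, pd_constMul ((hρ.mul hAB).da hp), pd_rho_mul2 hρ hpos hAB j hp,
      pd_add (((hus i).pd (ex j)).da hp) (((hus j).pd (ex i)).da hp),
      pd_comm (hus j) hp]
  have hdiv : ∀ j : Fin N, pd (ex i) (pd (ex j) (fun x => ρ x * u x j)) p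
      = ρ p * W ρ i p * (W ρ j p * u p j)
        + ρ p * (pd (ex i) (W ρ j) p * u p j + W ρ j p * pd (ex i) (fun r => u r j) p)
        + (ρ p * W ρ i p * pd (ex j) (fun r => u r j) p
          + ρ p * pd (ex i) (pd (ex j) (fun r => u r j)) p) := by
    intro j
    have hin : ∀ q ∈ U N, pd (ex j) (fun x => ρ x * u x j) q
        = ρ q * W ρ j q * u q j + ρ q * pd (ex j) (fun r => u r j) q :=
      fun q hq => pd_rho_mul2 hρ hpos (hus j) j hq
    rw [pd_congrU hin hp,
      pd_add (((hρ.mul (hWs j)).mul (hus j)).da hp) ((hρ.mul ((hus j).pd (ex j))).da hp),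
      pd_rho_mul3 hρ hpos (hWs j) (hus j) i hp,
      pd_rho_mul2 hρ hpos ((hus j).pd (ex j)) i hp]
  have hlapu : ∀ j : Fin N, pd (ex j) (pd (ex j) (fun x => ρ x * u x i)) p
      = ρ p * W ρ j p * (W ρ j p * u p i)
        + ρ p * (pd (ex j) (W ρ j) p * u p i + W ρ j p * pd (ex j) (fun r => u r i) p)
        + (ρ p * W ρ j p * pd (ex j) (fun r => u r i) p
          + ρ p * pd (ex j) (pd (ex j) (fun r => u r i)) p) := by
    intro j
    have hin : ∀ q ∈ U N, pd (ex j) (fun x => ρ x * u x i) q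
        = ρ q * W ρ j q * u q i + ρ q * pd (ex j) (fun r => u r i) q :=
      fun q hq => pd_rho_mul2 hρ hpos (hus i) j hq
    rw [pd_congrU hin hp,
      pd_add (((hρ.mul (hWs j)).mul (hus i)).da hp) ((hρ.mul ((hus i).pd (ex j))).da hp),
      pd_rho_mul3 hρ hpos (hWs j) (hus i) j hp,
      pd_rho_mul2 hρ hpos ((hus i).pd (ex j)) j hp]
  have hlapρ : ∀ j : Fin N, pd (ex j) (pd (ex j) (pd (ex i) ρ)) p
      = ρ p * W ρ j p * (W ρ j p * W ρ i p)
        + ρ p * (pd (ex j) (W ρ j) p * W ρ i p + W ρ j p * pd (ex i) (W ρ j) p)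
        + (ρ p * W ρ j p * pd (ex i) (W ρ j) p
          + ρ p * pd (ex i) (pd (ex j) (W ρ j)) p) := by
    intro j
    rw [pd_congrU (fun r hr => Drr hρ hpos i j hr) hp,
      pd_add (((hρ.mul (hWs j)).mul (hWs i)).da hp) ((hρ.mul ((hWs i).pd (ex j))).da hp),
      pd_rho_mul3 hρ hpos (hWs j) (hWs i) j hp,
      pd_rho_mul2 hρ hpos ((hWs i).pd (ex j)) j hp,
      hWsymp j, hswap j]
  have hdivρ : ∀ j : Fin N, pd (ex i) (pd (ex j) (pd (ex j) ρ)) p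
      = ρ p * W ρ i p * (W ρ j p * W ρ j p)
        + ρ p * (pd (ex i) (W ρ j) p * W ρ j p + W ρ j p * pd (ex i) (W ρ j) p)
        + (ρ p * W ρ i p * pd (ex j) (W ρ j) p
          + ρ p * pd (ex i) (pd (ex j) (W ρ j)) p) := by
    intro j
    rw [pd_congrU (fun r hr => Drr hρ hpos j j hr) hp,
      pd_add (((hρ.mul (hWs j)).mul (hWs j)).da hp) ((hρ.mul ((hWs j).pd (ex j))).da hp),
      pd_rho_mul3 hρ hpos (hWs j) (hWs j) i hp,
      pd_rho_mul2 hρ hpos ((hWs j).pd (ex j)) i hp]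
  -- capillarity expansion
  have hcap : pd (ex i) (fun q => lapx' (fun r => Real.sqrt (ρ r)) q / Real.sqrt (ρ q)) p
      = ∑ j, ((1 / 2) * (W ρ j p * pd (ex i) (W ρ j) p)
          + (1 / 2) * pd (ex i) (pd (ex j) (W ρ j)) p) := by
    rw [pd_congrU (fun r hr => F3 hρ hpos hr) hp,
      pd_sum (fun j _ => ((((hWs j).mul (hWs j)).constMul (1/4)).add
        (((hWs j).pd (ex j)).constMul (1/2))).da hp)]
    refine Finset.sum_congr rfl fun j _ => ?_
    rw [pd_add ((((hWs j).mul (hWs j)).constMul (1/4)).da hp)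
        ((((hWs j).pd (ex j)).constMul (1/2)).da hp),
      pd_constMul (((hWs j).mul (hWs j)).da hp),
      pd_constMul (((hWs j).pd (ex j)).da hp),
      pd_mul ((hWs j).da hp) ((hWs j).da hp)]
    ring
  -- the per-index identity
  have hG : ∀ j : Fin N,
      (1 / 2) * pd (ex j) (fun q => ρ q * v q i * v' q j) p
      + (1 / 2) * pd (ex j) (fun q => ρ q * v' q i * v q j) p
      - μ * pd (ex j) (pd (ex j) (fun q => ρ q * v q i)) p
      - (μ - c) * (pd (ex i) (pd (ex j) (fun x => ρ x * u x j)) p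
          + c * pd (ex i) (pd (ex j) (pd (ex j) ρ)) p)
      - c * pd (ex i) (pd (ex j) (fun x => ρ x * u x j)) p
      - pd (ex j) (fun q => ρ q * u q i * u q j) p
      + pd (ex j) (fun q => 2 * μ * ρ q *
          ((1 / 2) * (pd (ex j) (fun r => u r i) q + pd (ex i) (fun r => u r j) q))) p
      + 2 * κ2 * ρ p * ((1 / 2) * (W ρ j p * pd (ex i) (W ρ j) p)
          + (1 / 2) * pd (ex i) (pd (ex j) (W ρ j)) p) = 0 := by
    intro j
    rw [← hcκ, hs1 j, hs2 j, hs3 j, hvisc j, hdiv j, hlapu j, hlapρ j, hdivρ j,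
      e1 j, e2 j, e3 j, e4 j]
    ring
  have hsum0 : ∑ j : Fin N,
      ((1 / 2) * pd (ex j) (fun q => ρ q * v q i * v' q j) p
      + (1 / 2) * pd (ex j) (fun q => ρ q * v' q i * v q j) p
      - μ * pd (ex j) (pd (ex j) (fun q => ρ q * v q i)) p
      - (μ - c) * (pd (ex i) (pd (ex j) (fun x => ρ x * u x j)) p
          + c * pd (ex i) (pd (ex j) (pd (ex j) ρ)) p)
      - c * pd (ex i) (pd (ex j) (fun x => ρ x * u x j)) p
      - pd (ex j) (fun q => ρ q * u q i * u q j) p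
      + pd (ex j) (fun q => 2 * μ * ρ q *
          ((1 / 2) * (pd (ex j) (fun r => u r i) q + pd (ex i) (fun r => u r j) q))) p
      + 2 * κ2 * ρ p * ((1 / 2) * (W ρ j p * pd (ex i) (W ρ j) p)
          + (1 / 2) * pd (ex i) (pd (ex j) (W ρ j)) p)) = 0 :=
    Finset.sum_eq_zero fun j _ => hG j
  have hsplit : ∑ j : Fin N,
      ((1 / 2) * pd (ex j) (fun q => ρ q * v q i * v' q j) p
      + (1 / 2) * pd (ex j) (fun q => ρ q * v' q i * v q j) p
      - μ * pd (ex j) (pd (ex j) (fun q => ρ q * v q i)) p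
      - (μ - c) * (pd (ex i) (pd (ex j) (fun x => ρ x * u x j)) p
          + c * pd (ex i) (pd (ex j) (pd (ex j) ρ)) p)
      - c * pd (ex i) (pd (ex j) (fun x => ρ x * u x j)) p
      - pd (ex j) (fun q => ρ q * u q i * u q j) p
      + pd (ex j) (fun q => 2 * μ * ρ q *
          ((1 / 2) * (pd (ex j) (fun r => u r i) q + pd (ex i) (fun r => u r j) q))) p
      + 2 * κ2 * ρ p * ((1 / 2) * (W ρ j p * pd (ex i) (W ρ j) p)
          + (1 / 2) * pd (ex i) (pd (ex j) (W ρ j)) p))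
      = (1 / 2) * ∑ j, pd (ex j) (fun q => ρ q * v q i * v' q j) p
      + (1 / 2) * ∑ j, pd (ex j) (fun q => ρ q * v' q i * v q j) p
      - μ * ∑ j, pd (ex j) (pd (ex j) (fun q => ρ q * v q i)) p
      - (μ - c) * ∑ j, (pd (ex i) (pd (ex j) (fun x => ρ x * u x j)) p
          + c * pd (ex i) (pd (ex j) (pd (ex j) ρ)) p)
      - c * ∑ j, pd (ex i) (pd (ex j) (fun x => ρ x * u x j)) p
      - ∑ j, pd (ex j) (fun q => ρ q * u q i * u q j) p
      + ∑ j, pd (ex j) (fun q => 2 * μ * ρ q *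
          ((1 / 2) * (pd (ex j) (fun r => u r i) q + pd (ex i) (fun r => u r j) q))) p
      + 2 * κ2 * ρ p * ∑ j, ((1 / 2) * (W ρ j p * pd (ex i) (W ρ j) p)
          + (1 / 2) * pd (ex i) (pd (ex j) (W ρ j)) p) := by
    simp only [Finset.sum_add_distrib, Finset.sum_sub_distrib, ← Finset.mul_sum]
  have hmom' := hmom p hp i
  rw [hcap] at hmom'
  rw [hT1, hT5]
  linear_combination hmom' - hsplit + hsum0

end Key

end KW

/-- Reformulation of the Korteweg system via the effective velocities
`v₁ = u + c₁∇log ρ`, `v₂ = u + c₂∇log ρ` with `c₁ = μ − √(μ²−κ²)`, `c₂ = μ + √(μ²−κ²)`: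
`(i)` `∂ₜρ − c₁Δρ + div(ρv₁) = 0`;
`(ii)` `∂ₜ(ρv₁) + ½div(ρv₁⊗v₂) + ½div(ρv₂⊗v₁) − μΔ(ρv₁) − √(μ²−κ²)∇div(ρv₁) + ∇P(ρ) = 0`;
`(iii)` `∂ₜ(ρv₂) + ½div(ρv₁⊗v₂) + ½div(ρv₂⊗v₁) − μΔ(ρv₂) + √(μ²−κ²)∇div(ρv₂) + ∇P(ρ) = 0`. -/
theorem korteweg_effective_velocity_reformulation (N : ℕ) (hN : 1 ≤ N) (μ κ2 : ℝ)
    (hμ : 0 < μ) (hκ0 : 0 < κ2) (hκμ : κ2 ≤ μ ^ 2) (P : ℝ → ℝ) (hP : ContDiff ℝ (⊤ : ℕ∞) P)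
    (ρ : ℝ × (Fin N → ℝ) → ℝ) (u : ℝ × (Fin N → ℝ) → Fin N → ℝ)
    (hsol : IsKortewegSolution N μ κ2 P ρ u)
    (c₁ c₂ : ℝ) (hc₁ : c₁ = μ - Real.sqrt (μ ^ 2 - κ2))
    (hc₂ : c₂ = μ + Real.sqrt (μ ^ 2 - κ2))
    (v₁ v₂ : ℝ × (Fin N → ℝ) → Fin N → ℝ)
    (hv₁ : ∀ q : ℝ × (Fin N → ℝ), ∀ j : Fin N,
      v₁ q j = u q j + c₁ * dx' j (fun x => Real.log (ρ x)) q)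
    (hv₂ : ∀ q : ℝ × (Fin N → ℝ), ∀ j : Fin N,
      v₂ q j = u q j + c₂ * dx' j (fun x => Real.log (ρ x)) q) :
    ∀ p : ℝ × (Fin N → ℝ), 0 < p.1 →
      (dt' ρ p - c₁ * lapx' ρ p + ∑ j, dx' j (fun q => ρ q * v₁ q j) p = 0) ∧
      (∀ i : Fin N,
        dt' (fun q => ρ q * v₁ q i) p
          + (1 / 2) * ∑ j, dx' j (fun q => ρ q * v₁ q i * v₂ q j) p
          + (1 / 2) * ∑ j, dx' j (fun q => ρ q * v₂ q i * v₁ q j) p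
          - μ * lapx' (fun q => ρ q * v₁ q i) p
          - Real.sqrt (μ ^ 2 - κ2) *
              dx' i (fun q => ∑ j, dx' j (fun x => ρ x * v₁ x j) q) p
          + dx' i (fun q => P (ρ q)) p = 0) ∧
      (∀ i : Fin N,
        dt' (fun q => ρ q * v₂ q i) p
          + (1 / 2) * ∑ j, dx' j (fun q => ρ q * v₁ q i * v₂ q j) p
          + (1 / 2) * ∑ j, dx' j (fun q => ρ q * v₂ q i * v₁ q j) p
          - μ * lapx' (fun q => ρ q * v₂ q i) p
          + Real.sqrt (μ ^ 2 - κ2) *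
              dx' i (fun q => ∑ j, dx' j (fun x => ρ x * v₂ x j) q) p
          + dx' i (fun q => P (ρ q)) p = 0) := by
  classical
  obtain ⟨hρ, hu, hpos, hcont, hmom⟩ := hsol
  have hρ' : KW.Sm ρ := hρ
  have hu' : ContDiffOn ℝ (⊤ : ℕ∞) u (KW.U N) := hu
  have hpos' : ∀ q ∈ KW.U N, 0 < ρ q := hpos
  have hcont' : ∀ p ∈ KW.U N,
      KW.pd KW.et ρ p + ∑ j, KW.pd (KW.ex j) (fun q => ρ q * u q j) p = 0 :=
    fun p hp => hcont p hp
  have hmom' : ∀ p ∈ KW.U N, ∀ i : Fin N,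
      KW.pd KW.et (fun q => ρ q * u q i) p
        + ∑ j, KW.pd (KW.ex j) (fun q => ρ q * u q i * u q j) p
        - ∑ j, KW.pd (KW.ex j) (fun q => 2 * μ * ρ q *
            ((1 / 2) * (KW.pd (KW.ex j) (fun r => u r i) q
              + KW.pd (KW.ex i) (fun r => u r j) q))) p
        + KW.pd (KW.ex i) (fun q => P (ρ q)) p
        = 2 * κ2 * ρ p *
            KW.pd (KW.ex i) (fun q => lapx' (fun r => Real.sqrt (ρ r)) q / Real.sqrt (ρ q)) p :=
    fun p hp i => hmom p hp i
  have hv1' : ∀ q : ℝ × (Fin N → ℝ), ∀ j : Fin N, v₁ q j = u q j + c₁ * KW.W ρ j q := hv₁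
  have hv2' : ∀ q : ℝ × (Fin N → ℝ), ∀ j : Fin N, v₂ q j = u q j + c₂ * KW.W ρ j q := hv₂
  have hsq : Real.sqrt (μ ^ 2 - κ2) ^ 2 = μ ^ 2 - κ2 :=
    Real.sq_sqrt (by linarith)
  have h2c1 : (2 * μ - c₁) = c₂ := by rw [hc₁, hc₂]; ring
  have h2c2 : (2 * μ - c₂) = c₁ := by rw [hc₁, hc₂]; ring
  have hκ1 : c₁ * (2 * μ - c₁) = κ2 := by rw [hc₁]; linear_combination -hsq
  have hκ2 : c₂ * (2 * μ - c₂) = κ2 := by rw [hc₂]; linear_combination -hsq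
  have hv2'' : ∀ q : ℝ × (Fin N → ℝ), ∀ j : Fin N,
      v₂ q j = u q j + (2 * μ - c₁) * KW.W ρ j q := by
    intro q j; rw [h2c1]; exact hv2' q j
  have hv1'' : ∀ q : ℝ × (Fin N → ℝ), ∀ j : Fin N,
      v₁ q j = u q j + (2 * μ - c₂) * KW.W ρ j q := by
    intro q j; rw [h2c2]; exact hv1' q j
  have key2 := KW.key hρ' hu' hpos' hcont' hmom' c₁ hκ1 v₁ v₂ hv1' hv2''
  have key3 := KW.key hρ' hu' hpos' hcont' hmom' c₂ hκ2 v₂ v₁ hv2' hv1''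
  intro p hp
  refine ⟨?_, ?_, ?_⟩
  · -- part (i)
    have hus : ∀ k : Fin N, KW.Sm (fun r => u r k) := fun k => KW.Sm_u hu' k
    have hρu : ∀ k : Fin N, KW.Sm (fun x => ρ x * u x k) := fun k => hρ'.mul (hus k)
    have hrv1 : ∀ k : Fin N, ∀ q ∈ KW.U N,
        ρ q * v₁ q k = ρ q * u q k + c₁ * KW.pd (KW.ex k) ρ q := by
      intro k q hq
      rw [hv1' q k, KW.H1 hρ' hpos' k hq]; ring
    have hi : ∀ j : Fin N, KW.pd (KW.ex j) (fun q => ρ q * v₁ q j) p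
        = KW.pd (KW.ex j) (fun q => ρ q * u q j) p
          + c₁ * KW.pd (KW.ex j) (KW.pd (KW.ex j) ρ) p := by
      intro j
      rw [KW.pd_congrU (fun r hr => hrv1 j r hr) hp,
        KW.pd_add ((hρu j).da hp) (((hρ'.pd (KW.ex j)).constMul c₁).da hp),
        KW.pd_constMul ((hρ'.pd (KW.ex j)).da hp)]
    have hsum : ∑ j, KW.pd (KW.ex j) (fun q => ρ q * v₁ q j) p
        = ∑ j, KW.pd (KW.ex j) (fun q => ρ q * u q j) p
          + c₁ * ∑ j, KW.pd (KW.ex j) (KW.pd (KW.ex j) ρ) p := by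
      rw [Finset.sum_congr rfl (fun j _ => hi j), Finset.sum_add_distrib, ← Finset.mul_sum]
    simp only [KW.dt'_eq, KW.dx'_eq, KW.lapx'_eq]
    linear_combination hcont' p hp + hsum
  · -- part (ii)
    intro i
    have h := key2 p hp i
    have hs1 : μ - c₁ = Real.sqrt (μ ^ 2 - κ2) := by rw [hc₁]; ring
    rw [hs1] at h
    simp only [KW.dt'_eq, KW.dx'_eq, KW.lapx'_eq]
    linear_combination h
  · -- part (iii)
    intro i
    have h := key3 p hp i
    have hs2 : μ - c₂ = -Real.sqrt (μ ^ 2 - κ2) := by rw [hc₂]; ring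
    rw [hs2] at h
    simp only [KW.dt'_eq, KW.dx'_eq, KW.lapx'_eq]
    linear_combination h
end

section
/- Let c, ν, β > 0 with ν ≠ c, and let r > 0 satisfy (ν−c)² r > 4β. Set α = √(1 − 4β/((ν−c)² r)) ∈ (0,1), λ₁ = ½ r ((ν+c) + |ν−c| α) and λ₂ = ½ r ((ν+c) − |ν−c| α). Let A_r = [[c·r, 1], [−β·r, ν·r]]. Then for every t ≥ 0 the matrix exponential satisfies exp(−t A_r) = −(β / (|c−ν| α)) · M(t), where M(t) is the 2×2 matrix with entries M₁₁(t) = −2 e^{−tλ₁} / ( r (c−ν − |c−ν|α) ) + 2 e^{−tλ₂} / ( r (c−ν + |c−ν|α) ), M₁₂(t) = (1/(β r)) ( e^{−tλ₂} − e^{−tλ₁} ), M₂₁(t) = e^{−tλ₁} − e^{−tλ₂}, and M₂₂(t) = 2 e^{−tλ₁} / ( r (c−ν + |c−ν|α) ) − 2 e^{−tλ₂} / ( r (c−ν − |c−ν|α) ). -/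
set_option maxHeartbeats 1000000


/-- Explicit formula for the semigroup `exp(−t A_r)` of the linearized Korteweg system at a
high frequency `r` with `(ν−c)² r > 4β`, where `A_r = [[c·r, 1], [−β·r, ν·r]]`,
`α = √(1 − 4β/((ν−c)²r))`, and `λ₁, λ₂ = ½r((ν+c) ± |ν−c|α)` are the two real eigenvalues. -/
theorem korteweg_semigroup_high_freq (c ν β r : ℝ) (hc : 0 < c) (hν : 0 < ν) (hβ : 0 < β)
    (hνc : ν ≠ c) (hr : 0 < r) (hfreq : 4 * β < (ν - c) ^ 2 * r)
    (α : ℝ) (hα : α = Real.sqrt (1 - 4 * β / ((ν - c) ^ 2 * r)))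
    (lam₁ lam₂ : ℝ)
    (h₁ : lam₁ = (1 / 2) * r * ((ν + c) + |ν - c| * α))
    (h₂ : lam₂ = (1 / 2) * r * ((ν + c) - |ν - c| * α)) :
    ∀ t : ℝ, 0 ≤ t →
      NormedSpace.exp (-(t • (!![c * r, 1; -β * r, ν * r] : Matrix (Fin 2) (Fin 2) ℝ))) =
        (-(β / (|c - ν| * α))) •
          !![ -2 * Real.exp (-(t * lam₁)) / (r * (c - ν - |c - ν| * α)) +
                2 * Real.exp (-(t * lam₂)) / (r * (c - ν + |c - ν| * α)),
              (1 / (β * r)) * (Real.exp (-(t * lam₂)) - Real.exp (-(t * lam₁)));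
              Real.exp (-(t * lam₁)) - Real.exp (-(t * lam₂)),
              2 * Real.exp (-(t * lam₁)) / (r * (c - ν + |c - ν| * α)) -
                2 * Real.exp (-(t * lam₂)) / (r * (c - ν - |c - ν| * α)) ] := by
  intro t ht
  have hd : ν - c ≠ 0 := sub_ne_zero.mpr hνc
  have hd2 : (0:ℝ) < (ν - c) ^ 2 * r := by positivity
  have h1' : (0:ℝ) < 1 - 4 * β / ((ν - c) ^ 2 * r) := by
    rw [sub_pos, div_lt_one hd2]; linarith
  have hαpos : 0 < α := hα ▸ Real.sqrt_pos.mpr h1'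
  have hα2 : α ^ 2 = 1 - 4 * β / ((ν - c) ^ 2 * r) := by
    rw [hα, Real.sq_sqrt h1'.le]
  rw [abs_sub_comm c ν]
  subst h₁ h₂
  obtain ⟨K, hKdef⟩ : ∃ K : ℝ, K = |ν - c| * α := ⟨_, rfl⟩
  rw [← hKdef]
  have hKpos : 0 < K := hKdef ▸ mul_pos (abs_pos.mpr hd) hαpos
  have hKsq : K ^ 2 * r = (ν - c) ^ 2 * r - 4 * β := by
    rw [hKdef, mul_pow, sq_abs, hα2]; field_simp
  clear hKdef hα hα2 hαpos h1' hd2 hfreq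
  obtain ⟨l₁, hl₁⟩ : ∃ x : ℝ, x = (1 / 2) * r * ((ν + c) + K) := ⟨_, rfl⟩
  obtain ⟨l₂, hl₂⟩ : ∃ x : ℝ, x = (1 / 2) * r * ((ν + c) - K) := ⟨_, rfl⟩
  rw [← hl₁, ← hl₂]
  have hK0 : K ≠ 0 := hKpos.ne'
  have hr0 : r ≠ 0 := hr.ne'
  have hβ0 : β ≠ 0 := hβ.ne'
  have hrK : r * K ≠ 0 := mul_ne_zero hr0 hK0
  have hfac : r * ((c - ν - K) * (c - ν + K)) = 4 * β := by nlinarith [hKsq]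
  have hne1 : c - ν - K ≠ 0 := by
    intro h; rw [h, zero_mul, mul_zero] at hfac; linarith
  have hne2 : c - ν + K ≠ 0 := by
    intro h; rw [h, mul_zero, mul_zero] at hfac; linarith
  have hβdef : β = ((ν - c) ^ 2 * r - K ^ 2 * r) / 4 := by linarith [hKsq]
  have hnum : (ν - c) ^ 2 * r - K ^ 2 * r ≠ 0 := by
    intro h
    have : (4:ℝ) * β = 0 := by linarith [hKsq]
    simp at this; linarith
  obtain ⟨P, hP⟩ : ∃ P : Matrix (Fin 2) (Fin 2) ℝ,
      P = !![1, 1; l₁ - c * r, l₂ - c * r] := ⟨_, rfl⟩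
  obtain ⟨Q, hQ⟩ : ∃ Q : Matrix (Fin 2) (Fin 2) ℝ,
      Q = (r * K)⁻¹ • !![c * r - l₂, 1; l₁ - c * r, -1] := ⟨_, rfl⟩
  have hdiag : ∀ x y : ℝ, Matrix.diagonal ![x, y] = !![x, 0; 0, y] := by
    intro x y
    ext i j
    fin_cases i <;> fin_cases j <;> simp [Matrix.diagonal]
  have hPQ : P * Q = 1 := by
    rw [hP, hQ]
    ext i j
    fin_cases i <;> fin_cases j
    all_goals simp [Matrix.mul_apply, Fin.sum_univ_two, hl₁, hl₂]
    all_goals (field_simp; try ring)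
  have hQP : Q * P = 1 := by
    rw [hP, hQ]
    ext i j
    fin_cases i <;> fin_cases j
    all_goals simp [Matrix.mul_apply, Fin.sum_univ_two, hl₁, hl₂]
    all_goals (field_simp; try ring)
  have hUdet : IsUnit P.det := Matrix.isUnit_det_of_right_inverse hPQ
  have hU : IsUnit P := (Matrix.isUnit_iff_isUnit_det P).mpr hUdet
  have hPinv : P⁻¹ = Q := Matrix.inv_eq_right_inv hPQ
  have hconj : -(t • (!![c * r, 1; -β * r, ν * r] : Matrix (Fin 2) (Fin 2) ℝ)) =
      P * Matrix.diagonal ![-(t * l₁), -(t * l₂)] * P⁻¹ := by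
    rw [hPinv, hP, hQ, hdiag, Matrix.mul_smul, Matrix.mul_fin_two, Matrix.mul_fin_two, hβdef]
    ext i j
    fin_cases i <;> fin_cases j
    all_goals simp [hl₁, hl₂]
    all_goals field_simp
    all_goals ring
  rw [hconj, Matrix.exp_conj P _ hU, Matrix.exp_diagonal, hPinv]
  have hexp : NormedSpace.exp (![-(t * l₁), -(t * l₂)]) =
      ![Real.exp (-(t * l₁)), Real.exp (-(t * l₂))] := by
    rw [Pi.exp_def]
    funext i
    fin_cases i <;> simp [Real.exp_eq_exp_ℝ]
  have hnum2 : (ν - c) ^ 2 - K ^ 2 ≠ 0 := by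
    intro h; apply hnum; linear_combination r * h
  rw [hexp, hP, hQ, hdiag, Matrix.mul_smul, Matrix.mul_fin_two, Matrix.mul_fin_two, hβdef]
  ext i j
  fin_cases i <;> fin_cases j
  all_goals simp [hl₁, hl₂]
  all_goals field_simp
  all_goals ring
end

section
/- Let c, ν, β > 0. There exist constants r₀ > 0, C ≥ 1 and κ > 0 (depending only on c, ν, β) such that for every r ≥ r₀ and every differentiable (q, d) : [0,∞) → ℝ² satisfying q'(t) = −c r² q(t) − r d(t) and d'(t) = β r q(t) − ν r² d(t) for all t ≥ 0, one has, for every t ≥ 0: r² q(t)² + d(t)² ≤ C e^{−κ r² t} ( r² q(0)² + d(0)² ). -/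
set_option maxHeartbeats 1000000 in
/-- High-frequency Lyapunov estimate for the linearized Korteweg system, mode by mode:
there exist `r₀ > 0`, `C ≥ 1` and `κ > 0` depending only on `c, ν, β` such that for `r ≥ r₀`,
any solution of `q' = −cr²q − rd`, `d' = βrq − νr²d` on `[0,∞)` satisfies
`r²q(t)² + d(t)² ≤ C e^{−κr²t} (r²q(0)² + d(0)²)`. -/
theorem korteweg_mode_energy_decay_high_freq (c ν β : ℝ) (hc : 0 < c) (hν : 0 < ν)
    (hβ : 0 < β) :
    ∃ r₀ > (0:ℝ), ∃ C ≥ (1:ℝ), ∃ κ > (0:ℝ),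
      ∀ r : ℝ, r₀ ≤ r → ∀ q d : ℝ → ℝ,
        (∀ t, 0 ≤ t →
          HasDerivWithinAt q (-(c * r ^ 2) * q t - r * d t) (Set.Ici 0) t) →
        (∀ t, 0 ≤ t →
          HasDerivWithinAt d (β * r * q t - ν * r ^ 2 * d t) (Set.Ici 0) t) →
        ∀ t, 0 ≤ t →
          r ^ 2 * q t ^ 2 + d t ^ 2 ≤
            C * Real.exp (-(κ * r ^ 2 * t)) * (r ^ 2 * q 0 ^ 2 + d 0 ^ 2) := by
  have hs0 : 0 < c + ν := by linarith
  set w : ℝ := (c + ν)⁻¹ with hwdef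
  have hw0 : 0 < w := by positivity
  have hw : (c + ν) * w = 1 := mul_inv_cancel₀ (ne_of_gt hs0)
  set u : ℝ := ν⁻¹ with hudef
  have hu0 : 0 < u := by positivity
  have hu : ν * u = 1 := mul_inv_cancel₀ (ne_of_gt hν)
  set A : ℝ := 1 + 2*w^2 + 2*u*w with hA
  have hA0 : 0 < A := by positivity
  have hA1 : 1 + 2*w^2 ≤ A := by linarith only [hA, mul_pos hu0 hw0]
  have h1w : 0 < 1 + w := by positivity
  have hAw : 0 < A + w := by positivity
  set κ : ℝ := min (c/(1+w)) (ν/(A+w)) with hκdef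
  have hκ0 : 0 < κ := lt_min (by positivity) (by positivity)
  have hκ1 : κ * (1+w) ≤ c := by
    have h := min_le_left (c/(1+w)) (ν/(A+w))
    calc κ * (1+w) ≤ (c/(1+w)) * (1+w) := mul_le_mul_of_nonneg_right h h1w.le
      _ = c := div_mul_cancel₀ c (ne_of_gt h1w)
  have hκ2 : κ * (A+w) ≤ ν := by
    have h := min_le_right (c/(1+w)) (ν/(A+w))
    calc κ * (A+w) ≤ (ν/(A+w)) * (A+w) := mul_le_mul_of_nonneg_right h hAw.le
      _ = ν := div_mul_cancel₀ ν (ne_of_gt hAw)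
  have hAν : ν + 2*w ≤ A*ν := by
    have e : A*ν = ν + 2*ν*w^2 + 2*w*(ν*u) := by rw [hA]; ring
    rw [hu, mul_one] at e
    linarith only [e, mul_pos hν (mul_pos hw0 hw0)]
  set M : ℝ := A + 2*w^2 + 2 with hM
  have hM0 : 0 < M := by positivity
  have hM32 : (3:ℝ)/2 ≤ M := by linarith only [hM, hA0, sq_nonneg w]
  have hMA : A + 2*w^2 ≤ M := by linarith
  clear_value M κ A u w
  refine ⟨Real.sqrt (A*β/c + A*β/ν) + 1, by positivity, 2*M, by linarith, κ, hκ0, ?_⟩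
  intro r hr q d hq hd
  have hr0 : 0 < r := lt_of_lt_of_le (by positivity) hr
  have hX : 0 ≤ A*β/c + A*β/ν := by positivity
  have hr2 : A*β/c + A*β/ν ≤ r^2 := by
    have h1 : Real.sqrt (A*β/c + A*β/ν) ≤ r := le_trans (by linarith) hr
    calc A*β/c + A*β/ν = Real.sqrt (A*β/c + A*β/ν)^2 := (Real.sq_sqrt hX).symm
      _ ≤ r^2 := by nlinarith [Real.sqrt_nonneg (A*β/c + A*β/ν)]
  have hrc : A*β ≤ c*r^2 := by
    have h1 : A*β/c ≤ r^2 := by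
      have : 0 ≤ A*β/ν := by positivity
      linarith
    rw [div_le_iff₀ hc] at h1; linarith
  have hrν : A*β ≤ ν*r^2 := by
    have h1 : A*β/ν ≤ r^2 := by
      have : 0 ≤ A*β/c := by positivity
      linarith
    rw [div_le_iff₀ hν] at h1; linarith
  -- key quadratic-form inequality
  have key : ∀ g D : ℝ,
      (κ*r^2 - 2*c*r^2 - 2*β*w)*g^2 + (κ*A*r^2 + 2*w*r^2 - 2*A*ν*r^2)*D^2
        + (2*A*β - 2*κ*w*r^2)*(g*D) ≤ 0 := by
    intro g D
    have c1 : 2*A*β*(g*D) ≤ A*β*g^2 + A*β*D^2 := by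
      linarith only [mul_nonneg (mul_pos hA0 hβ).le (sq_nonneg (g-D))]
    have hk : 0 ≤ κ*w*r^2 := by positivity
    have c2 : -(2*κ*w*r^2)*(g*D) ≤ κ*w*r^2*g^2 + κ*w*r^2*D^2 := by
      linarith only [mul_nonneg hk (sq_nonneg (g+D))]
    have hb1 : κ*r^2 + κ*w*r^2 ≤ c*r^2 := by
      have h := mul_le_mul_of_nonneg_right hκ1 (sq_nonneg r)
      linarith only [h]
    have hb2 : κ*A*r^2 + 2*w*r^2 + κ*w*r^2 + A*β ≤ 2*A*ν*r^2 := by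
      have p1 : κ*(A+w)*r^2 ≤ ν*r^2 := mul_le_mul_of_nonneg_right hκ2 (sq_nonneg r)
      have p2 : (ν + 2*w)*r^2 ≤ A*ν*r^2 := mul_le_mul_of_nonneg_right hAν (sq_nonneg r)
      have p3 : 0 ≤ w*r^2 := by positivity
      linarith only [p1, p2, p3, hrν]
    have t1 : (κ*r^2 - 2*c*r^2 - 2*β*w)*g^2 ≤ (-(κ*w*r^2) - A*β)*g^2 := by
      apply mul_le_mul_of_nonneg_right _ (sq_nonneg g)
      have : 0 ≤ β*w := by positivity
      linarith
    have t2 : (κ*A*r^2 + 2*w*r^2 - 2*A*ν*r^2)*D^2 ≤ (-(κ*w*r^2) - A*β)*D^2 := by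
      apply mul_le_mul_of_nonneg_right _ (sq_nonneg D)
      linarith
    linarith only [t1, t2, c1, c2]
  -- the modified energy and its derivative
  set F : ℝ → ℝ := fun t => r * q t * (r * q t) + A * (d t * d t) - 2*w * (r * q t * d t)
    with hFdef
  set G : ℝ → ℝ := fun t =>
      r * (-(c * r ^ 2) * q t - r * d t) * (r * q t)
        + r * q t * (r * (-(c * r ^ 2) * q t - r * d t))
        + A * ((β * r * q t - ν * r ^ 2 * d t) * d t + d t * (β * r * q t - ν * r ^ 2 * d t))
        - 2*w * (r * (-(c * r ^ 2) * q t - r * d t) * d t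
            + r * q t * (β * r * q t - ν * r ^ 2 * d t)) with hGdef
  have hF' : ∀ x ∈ Set.Ici (0:ℝ), HasDerivWithinAt F (G x) (Set.Ici 0) x := by
    intro x hx
    have h1 := (hq x hx).const_mul r
    have h2 := hd x hx
    simp only [hGdef, hFdef]
    exact ((h1.mul h1).add ((h2.mul h2).const_mul A)).sub ((h1.mul h2).const_mul (2*w))
  have keyG : ∀ x : ℝ, G x + κ*r^2 * F x ≤ 0 := by
    intro x
    have e : G x + κ*r^2*F x =
        (κ*r^2 - 2*c*r^2 - 2*β*w)*(r*q x)^2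
          + (κ*A*r^2 + 2*w*r^2 - 2*A*ν*r^2)*(d x)^2
          + (2*A*β - 2*κ*w*r^2)*((r*q x)*(d x)) := by
      simp only [hGdef, hFdef]
      linear_combination (2*r^2*(r*q x)*(d x)) * hw
    rw [e]
    exact key (r*q x) (d x)
  have hExp : ∀ x : ℝ, HasDerivAt (fun y => Real.exp (κ*r^2*y)) (Real.exp (κ*r^2*x) * (κ*r^2)) x := by
    intro x
    have h := ((hasDerivAt_id x).const_mul (κ*r^2)).exp
    simpa using h
  have hh : ∀ x ∈ Set.Ici (0:ℝ),
      HasDerivWithinAt (fun y => F y * Real.exp (κ*r^2*y))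
        ((G x + κ*r^2 * F x) * Real.exp (κ*r^2*x)) (Set.Ici 0) x := by
    intro x hx
    have h := (hF' x hx).mul (hExp x).hasDerivWithinAt
    have e : G x * Real.exp (κ*r^2*x) + F x * (Real.exp (κ*r^2*x) * (κ*r^2))
        = (G x + κ*r^2 * F x) * Real.exp (κ*r^2*x) := by ring
    rw [e] at h
    exact h
  have hcont : ContinuousOn (fun y => F y * Real.exp (κ*r^2*y)) (Set.Ici 0) :=
    fun x hx => (hh x hx).continuousWithinAt
  have hmono : AntitoneOn (fun y => F y * Real.exp (κ*r^2*y)) (Set.Ici 0) := by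
    apply antitoneOn_of_deriv_nonpos (convex_Ici 0) hcont
    · intro x hx
      rw [interior_Ici] at hx
      exact ((hh x (Set.mem_Ici.mpr (le_of_lt (Set.mem_Ioi.mp hx)))).hasDerivAt (Ici_mem_nhds hx)).differentiableAt.differentiableWithinAt
    · intro x hx
      rw [interior_Ici] at hx
      rw [((hh x (Set.mem_Ici.mpr (le_of_lt (Set.mem_Ioi.mp hx)))).hasDerivAt (Ici_mem_nhds hx)).deriv]
      exact mul_nonpos_of_nonpos_of_nonneg (keyG x) (Real.exp_pos _).le
  clear_value F G
  intro t ht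
  have hdecay : F t * Real.exp (κ*r^2*t) ≤ F 0 := by
    have h := hmono (Set.self_mem_Ici) (Set.mem_Ici.mpr ht) ht
    simpa using h
  have lowF : (1/2)*((r*q t)^2 + (d t)^2) ≤ F t := by
    have hcr : 2*w*(r*q t*d t) ≤ (1/2)*(r*q t)^2 + 2*w^2*(d t)^2 := by
      linarith only [sq_nonneg (r*q t - 2*w*(d t))]
    simp only [hFdef]
    linarith only [hcr, mul_nonneg (by linarith only [hA1] : (0:ℝ) ≤ A - 1/2 - 2*w^2) (sq_nonneg (d t))]
  have upF : F 0 ≤ M*((r*q 0)^2 + (d 0)^2) := by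
    have hcr : -(2*w*(r*q 0*d 0)) ≤ (1/2)*(r*q 0)^2 + 2*w^2*(d 0)^2 := by
      linarith only [sq_nonneg (r*q 0 + 2*w*(d 0))]
    simp only [hFdef]
    linarith only [hcr, mul_nonneg (by linarith only [hM32] : (0:ℝ) ≤ M - 3/2) (sq_nonneg (r*q 0)),
      mul_nonneg (by linarith only [hMA] : (0:ℝ) ≤ M - A - 2*w^2) (sq_nonneg (d 0))]
  have e1 : F t ≤ F 0 * Real.exp (-(κ*r^2*t)) := by
    have hid : F t = (F t * Real.exp (κ*r^2*t)) * Real.exp (-(κ*r^2*t)) := by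
      rw [mul_assoc, ← Real.exp_add]; simp
    rw [hid]
    exact mul_le_mul_of_nonneg_right hdecay (Real.exp_pos _).le
  have e2 : F 0 * Real.exp (-(κ*r^2*t)) ≤ M*((r*q 0)^2 + (d 0)^2) * Real.exp (-(κ*r^2*t)) :=
    mul_le_mul_of_nonneg_right upF (Real.exp_pos _).le
  have final : (r*q t)^2 + (d t)^2 ≤ 2*M * Real.exp (-(κ*r^2*t)) * ((r*q 0)^2 + (d 0)^2) := by
    linarith only [lowF, e1, e2]
  calc r ^ 2 * q t ^ 2 + d t ^ 2 = (r*q t)^2 + (d t)^2 := by ring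
    _ ≤ 2*M * Real.exp (-(κ*r^2*t)) * ((r*q 0)^2 + (d 0)^2) := final
    _ = 2*M * Real.exp (-(κ * r ^ 2 * t)) * (r ^ 2 * q 0 ^ 2 + d 0 ^ 2) := by ring
end

section
/- For all real numbers M, m with 0 < m ≤ M/2, all α ∈ (0,1], and all t > 0, r > 0, one has (1/α) · | e^{−t r (M + m α)/2} − e^{−t r (M − m α)/2} | ≤ (8 m / (e M)) · e^{−t r M/8}, where e is Euler's number. -/
/-- Uniform bound for the eigenvalue difference of the linearized Korteweg symbol in the
high-frequency regime near the eigenvalue crossing: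
for `0 < m ≤ M/2` and `0 < α ≤ 1`,
`(1/α)|e^{−tr(M+mα)/2} − e^{−tr(M−mα)/2}| ≤ (8m/(eM)) e^{−trM/8}`. -/
theorem korteweg_high_freq_exp_diff_bound (M m α t r : ℝ) (hm : 0 < m) (hmM : m ≤ M / 2)
    (hα0 : 0 < α) (hα1 : α ≤ 1) (ht : 0 < t) (hr : 0 < r) :
    (1 / α) * |Real.exp (-(t * r * (M + m * α) / 2)) -
        Real.exp (-(t * r * (M - m * α) / 2))| ≤
      (8 * m / (Real.exp 1 * M)) * Real.exp (-(t * r * M / 8)) := by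
  have hM : 0 < M := by linarith
  set u : ℝ := t * r * m * α / 2 with hu_def
  have hu0 : 0 < u := by positivity
  -- rewrite the absolute value
  have habs : |Real.exp (-(t * r * (M + m * α) / 2)) - Real.exp (-(t * r * (M - m * α) / 2))|
      = Real.exp (-(t * r * M / 2)) * (Real.exp u - Real.exp (-u)) := by
    have e1 : Real.exp (-(t * r * M / 2)) * Real.exp u = Real.exp (-(t * r * (M - m * α) / 2)) := by
      rw [← Real.exp_add]; congr 1; rw [hu_def]; ring
    have e2 : Real.exp (-(t * r * M / 2)) * Real.exp (-u)
        = Real.exp (-(t * r * (M + m * α) / 2)) := by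
      rw [← Real.exp_add]; congr 1; rw [hu_def]; ring
    have h : Real.exp (-(t * r * (M + m * α) / 2)) ≤ Real.exp (-(t * r * (M - m * α) / 2)) :=
      Real.exp_le_exp.mpr (by nlinarith)
    have hnn : 0 ≤ Real.exp (-(t * r * (M - m * α) / 2))
        - Real.exp (-(t * r * (M + m * α) / 2)) := by linarith
    rw [abs_sub_comm, abs_of_nonneg hnn, ← e1, ← e2]
    ring
  rw [habs]
  -- bound exp u - exp (-u) ≤ 2 u exp u
  have hsinh : Real.exp u - Real.exp (-u) ≤ 2 * u * Real.exp u := by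
    have h1 : 1 - 2 * u ≤ Real.exp (-(2 * u)) := by
      have := Real.add_one_le_exp (-(2 * u)); linarith
    have h2 : Real.exp (-u) = Real.exp u * Real.exp (-(2 * u)) := by
      rw [← Real.exp_add]; ring_nf
    have h3 : 0 < Real.exp u := Real.exp_pos u
    nlinarith
  -- hence LHS ≤ t r m * exp(-(trM/2) + u)
  have step1 : (1 / α) * (Real.exp (-(t * r * M / 2)) * (Real.exp u - Real.exp (-u)))
      ≤ t * r * m * Real.exp (-(t * r * M / 2) + u) := by
    rw [Real.exp_add]
    have h3 : 0 < Real.exp (-(t * r * M / 2)) := Real.exp_pos _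
    have h4 : (1 / α) * (Real.exp (-(t * r * M / 2)) * (2 * u * Real.exp u))
        = t * r * m * (Real.exp (-(t * r * M / 2)) * Real.exp u) := by
      field_simp [hu_def]; ring
    have := mul_le_mul_of_nonneg_left hsinh (le_of_lt h3)
    have h5 := mul_le_mul_of_nonneg_left this (by positivity : (0:ℝ) ≤ 1 / α)
    calc (1 / α) * (Real.exp (-(t * r * M / 2)) * (Real.exp u - Real.exp (-u)))
        ≤ (1 / α) * (Real.exp (-(t * r * M / 2)) * (2 * u * Real.exp u)) := h5
      _ = t * r * m * (Real.exp (-(t * r * M / 2)) * Real.exp u) := h4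
  -- u ≤ trM/4
  have hu_le : u ≤ t * r * M / 4 := by
    have : m * α ≤ M / 2 := by nlinarith
    have h := mul_le_mul_of_nonneg_left this (le_of_lt (mul_pos ht hr))
    rw [hu_def]; nlinarith [h]
  have step2 : t * r * m * Real.exp (-(t * r * M / 2) + u)
      ≤ t * r * m * Real.exp (-(t * r * M / 4)) := by
    apply mul_le_mul_of_nonneg_left _ (by positivity)
    exact Real.exp_le_exp.mpr (by linarith)
  -- final: t r m exp(-2X) ≤ (8m/(eM)) exp(-X) with X = trM/8
  set X : ℝ := t * r * M / 8 with hX_def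
  have hX0 : 0 < X := by positivity
  have hkey : X * Real.exp (-(2 * X)) ≤ Real.exp (-X) * Real.exp (-1) := by
    have h1 : X ≤ Real.exp (X - 1) := by
      have := Real.add_one_le_exp (X - 1); linarith
    have h2 : Real.exp (X - 1) * Real.exp (-(2 * X)) = Real.exp (-X) * Real.exp (-1) := by
      rw [← Real.exp_add, ← Real.exp_add]; ring_nf
    have h3 : 0 < Real.exp (-(2 * X)) := Real.exp_pos _
    nlinarith
  have step3 : t * r * m * Real.exp (-(t * r * M / 4))
      ≤ (8 * m / (Real.exp 1 * M)) * Real.exp (-(t * r * M / 8)) := by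
    have htr : t * r * m = (8 * m / M) * X := by rw [hX_def]; field_simp
    have harg : -(t * r * M / 4) = -(2 * X) := by rw [hX_def]; ring
    have harg2 : -(t * r * M / 8) = -X := by rw [hX_def]
    rw [htr, harg, harg2, mul_assoc]
    have hc : 0 < 8 * m / M := by positivity
    have := mul_le_mul_of_nonneg_left hkey (le_of_lt hc)
    have heq : (8 * m / M) * (Real.exp (-X) * Real.exp (-1))
        = (8 * m / (Real.exp 1 * M)) * Real.exp (-X) := by
      have hE : Real.exp (-1 : ℝ) = (Real.exp 1)⁻¹ := Real.exp_neg 1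
      have hne : Real.exp 1 ≠ 0 := (Real.exp_pos 1).ne'
      rw [hE]
      field_simp
    linarith [this, heq ▸ this]
  linarith [step1, step2, step3]
end
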